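/- arXiv:math/0310312 — 5 statements merged into one kernel-verified Lean document; each statement's English description precedes it below -/
import Mathlib

section
/- Let U, V, W be Banach spaces over 𝕜 = ℝ or ℂ and let ι : U → V and π : V → W be continuous linear maps such that ι is injective, range ι = ker π, and π is surjective (i.e. 0 → U → V → W → 0 is an exact sequence of Banach spaces). Then the dual sequence 0 → W* → V* → U* → 0 is exact; that is, the dual map π* : W* → V* is injective, range π* = ker ι*, and the dual map ι* : V* → U* is surjective. -/
/-
A functional killing `ker π = range ι` descends along the quotient map `π`, which is open by the
open mapping theorem; and `ι` is an isomorphism onto its closed range, so a functional on `U`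
becomes one on `range ι` and extends to `V` by Hahn–Banach.
-/

open NormedSpace

variable {𝕜 : Type*} [RCLike 𝕜]

/-- The dual map `f* : F* → E*`, `f*(μ) = μ ∘ f`, of a continuous linear map `f : E → F`. -/
noncomputable def dualMap {E F : Type*} [NormedAddCommGroup E] [NormedSpace 𝕜 E]
    [NormedAddCommGroup F] [NormedSpace 𝕜 F] (f : E →L[𝕜] F) :
    StrongDual 𝕜 F →L[𝕜] StrongDual 𝕜 E :=
  (ContinuousLinearMap.compL 𝕜 E F 𝕜).flip f

section DualMap

variable {E F G : Type*} [NormedAddCommGroup E] [NormedSpace 𝕜 E]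
  [NormedAddCommGroup F] [NormedSpace 𝕜 F] [NormedAddCommGroup G] [NormedSpace 𝕜 G]

theorem dualMap_apply (f : E →L[𝕜] F) (μ : StrongDual 𝕜 F) (x : E) :
    dualMap f μ x = μ (f x) := rfl

theorem dualMap_injective_of_denseRange {f : E →L[𝕜] F} (hf : DenseRange f) :
    Function.Injective (dualMap f) := fun μ₁ μ₂ h =>
  DFunLike.coe_injective <|
    hf.equalizer μ₁.continuous μ₂.continuous (funext fun x => DFunLike.congr_fun h x)

theorem exists_dualMap_eq_of_isQuotientMap {f : E →L[𝕜] F} (hf : Topology.IsQuotientMap ⇑f)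
    {μ : StrongDual 𝕜 E} (hμ : ∀ x, f x = 0 → μ x = 0) :
    ∃ ν : StrongDual 𝕜 F, dualMap f ν = μ := by
  let e := LinearMap.quotKerEquivOfSurjective (f : E →ₗ[𝕜] F) hf.surjective
  let ν : F →ₗ[𝕜] 𝕜 :=
    ((LinearMap.ker (f : E →ₗ[𝕜] F)).liftQ (μ : E →ₗ[𝕜] 𝕜) hμ).comp e.symm.toLinearMap
  have hν : ∀ x, ν (f x) = μ x := fun x => by
    have : e.symm (f x) = Submodule.Quotient.mk x := e.symm_apply_eq.mpr rfl
    simp only [ν, LinearMap.comp_apply, LinearEquiv.coe_coe, this]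
    rfl
  have hν_cont : Continuous ν := by
    rw [hf.continuous_iff, show (ν : F → 𝕜) ∘ f = μ from funext hν]
    exact μ.continuous
  exact ⟨⟨ν, hν_cont⟩, ContinuousLinearMap.ext hν⟩

theorem range_dualMap_eq_of_range_eq_ker {f : E →L[𝕜] F} {g : F →L[𝕜] G}
    (hg : Topology.IsQuotientMap ⇑g) (hfg : Set.range f = {y : F | g y = 0}) :
    Set.range (dualMap g) = {μ : StrongDual 𝕜 F | dualMap f μ = 0} := by
  have hgf : ∀ x, g (f x) = 0 := fun x => by
    simpa [hfg] using Set.mem_range_self (f := f) x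
  ext μ
  constructor
  · rintro ⟨ν, rfl⟩
    ext x
    simp [dualMap_apply, hgf]
  · intro hμ
    refine exists_dualMap_eq_of_isQuotientMap hg fun y hy => ?_
    obtain ⟨x, rfl⟩ : y ∈ Set.range f := hfg ▸ hy
    exact DFunLike.congr_fun hμ x

theorem dualMap_surjective_of_isClosed_range [CompleteSpace E] [CompleteSpace F]
    {f : E →L[𝕜] F} (hinj : Function.Injective f) (hclo : IsClosed (Set.range f)) :
    Function.Surjective (dualMap f) := by
  intro φ
  let e := f.equivRange hinj hclo
  obtain ⟨ψ, hψ, -⟩ :=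
    exists_extension_norm_eq (LinearMap.range (f : E →ₗ[𝕜] F)) (φ.comp (e.symm : _ →L[𝕜] E))
  refine ⟨ψ, ContinuousLinearMap.ext fun x => ?_⟩
  have hψx := hψ (e x)
  rw [ContinuousLinearMap.comp_apply, ContinuousLinearEquiv.coe_coe, e.symm_apply_apply] at hψx
  exact hψx

end DualMap

/-- If `0 → U → V → W → 0` is an exact sequence of Banach spaces, then the dual
sequence `0 → W* → V* → U* → 0` is exact. -/
theorem dual_sequence_exact {U V W : Type*}
    [NormedAddCommGroup U] [NormedSpace 𝕜 U] [CompleteSpace U]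
    [NormedAddCommGroup V] [NormedSpace 𝕜 V] [CompleteSpace V]
    [NormedAddCommGroup W] [NormedSpace 𝕜 W] [CompleteSpace W]
    (ι : U →L[𝕜] V) (π : V →L[𝕜] W)
    (hι : Function.Injective ι)
    (hexact : Set.range ι = {v : V | π v = 0})
    (hπ : Function.Surjective π) :
    Function.Injective (dualMap π) ∧
      Set.range (dualMap π) = {μ : StrongDual 𝕜 V | dualMap ι μ = 0} ∧
      Function.Surjective (dualMap ι) := by
  have hclosed : IsClosed (Set.range ι) := hexact ▸ isClosed_eq π.continuous continuous_const
  exact ⟨dualMap_injective_of_denseRange hπ.denseRange,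
    range_dualMap_eq_of_range_eq_ker (π.isQuotientMap hπ) hexact,
    dualMap_surjective_of_isClosed_range hι hclosed⟩
end

section
/- Let U₀, V₀, W₀ be Banach spaces over 𝕜 = ℝ or ℂ and set U := (U₀)*, V := (V₀)*, W := (W₀)*; regard U₀ ⊆ U*, V₀ ⊆ V*, W₀ ⊆ W* via the canonical embeddings into the double duals. Suppose ι : U → V and π : V → W are continuous linear maps with ι injective, range ι = ker π, and π surjective, and suppose π*(W₀) ⊆ V₀ and ι*(V₀) ⊆ U₀. Let π₀ : W₀ → V₀ and ι₀ : V₀ → U₀ denote the restrictions of π* and ι*. Then the norm closure of the range of π₀ in V₀ equals ker ι₀. -/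
open NormedSpace

variable {𝕜 : Type*} [RCLike 𝕜]

/-! By Hahn–Banach, the closure of a subspace of `V₀` is the common kernel of the functionals
`f ∈ V = V₀*` annihilating it. Since `f (π₀ w) = (π f) w`, such `f` are exactly `ker π = range ι`,
and `(ι u) v = u (ι₀ v)`; so `v` lies in the closure of `range π₀` iff every `u ∈ U` kills
`ι₀ v`, i.e. iff `ι₀ v = 0`. -/

theorem mem_closure_iff_forall_dual_eq_zero {E : Type*} [NormedAddCommGroup E] [NormedSpace 𝕜 E]
    (p : Submodule 𝕜 E) (x : E) :
    x ∈ closure (p : Set E) ↔ ∀ f : StrongDual 𝕜 E, (∀ y ∈ p, f y = 0) → f x = 0 := by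
  constructor
  · intro hx f hf
    exact (isClosed_singleton.preimage f.continuous).closure_subset_iff.2 hf hx
  · intro h
    by_contra hx
    set S := p.topologicalClosure
    have : IsClosed (S : Set E) := p.isClosed_topologicalClosure
    -- Hahn–Banach in the normed quotient `E ⧸ S`, where `x` becomes nonzero.
    have hxS : S.mkQL x ≠ 0 := by
      rwa [Submodule.mkQL_apply, Submodule.mkQ_apply, ne_eq, Submodule.Quotient.mk_eq_zero,
        ← SetLike.mem_coe, p.topologicalClosure_coe]
    obtain ⟨g, hg⟩ := SeparatingDual.exists_ne_zero (R := 𝕜) hxS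
    refine hg (h (g.comp S.mkQL) fun y hy => ?_)
    rw [ContinuousLinearMap.comp_apply, Submodule.mkQL_apply, Submodule.mkQ_apply,
      (Submodule.Quotient.mk_eq_zero S).2 (p.le_topologicalClosure hy), map_zero]

theorem apply_eq_of_inclusionInDoubleDual_eq_dualMap {E F : Type*}
    [NormedAddCommGroup E] [NormedSpace 𝕜 E] [NormedAddCommGroup F] [NormedSpace 𝕜 F]
    {f : StrongDual 𝕜 E →L[𝕜] StrongDual 𝕜 F} {g : F →L[𝕜] E}
    (hg : ∀ x, inclusionInDoubleDual 𝕜 E (g x) = dualMap f (inclusionInDoubleDual 𝕜 F x))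
    (μ : StrongDual 𝕜 E) (x : F) : μ (g x) = f μ x :=
  congr($(hg x) μ)

theorem predual_sequence_closure_range_general {U₀ V₀ W₀ : Type*}
    [NormedAddCommGroup U₀] [NormedSpace 𝕜 U₀]
    [NormedAddCommGroup V₀] [NormedSpace 𝕜 V₀]
    [NormedAddCommGroup W₀] [NormedSpace 𝕜 W₀]
    (ι : StrongDual 𝕜 U₀ →L[𝕜] StrongDual 𝕜 V₀) (π : StrongDual 𝕜 V₀ →L[𝕜] StrongDual 𝕜 W₀)
    (hexact : Set.range ι = {v : StrongDual 𝕜 V₀ | π v = 0})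
    -- `π₀ : W₀ → V₀` is the restriction of `π*` to the preduals:
    (π₀ : W₀ →L[𝕜] V₀)
    (hπ₀ : ∀ w : W₀,
      inclusionInDoubleDual 𝕜 V₀ (π₀ w) = dualMap π (inclusionInDoubleDual 𝕜 W₀ w))
    -- `ι₀ : V₀ → U₀` is the restriction of `ι*` to the preduals:
    (ι₀ : V₀ →L[𝕜] U₀)
    (hι₀ : ∀ v : V₀,
      inclusionInDoubleDual 𝕜 U₀ (ι₀ v) = dualMap ι (inclusionInDoubleDual 𝕜 V₀ v)) :
    closure (Set.range π₀) = {v : V₀ | ι₀ v = 0} := by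
  have hπ₀' := apply_eq_of_inclusionInDoubleDual_eq_dualMap hπ₀
  have hι₀' := apply_eq_of_inclusionInDoubleDual_eq_dualMap hι₀
  have annihilator_eq_ker : ∀ f : StrongDual 𝕜 V₀,
      (∀ y ∈ LinearMap.range (π₀ : W₀ →ₗ[𝕜] V₀), f y = 0) ↔ f ∈ Set.range ι := by
    intro f
    rw [hexact, Set.mem_ofPred_eq, ContinuousLinearMap.ext_iff]
    simp only [LinearMap.mem_range, forall_exists_index, forall_apply_eq_imp_iff, hπ₀',
      ContinuousLinearMap.coe_coe, zero_apply]
  ext v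
  rw [← ContinuousLinearMap.coe_coe π₀, ← LinearMap.coe_range, mem_closure_iff_forall_dual_eq_zero,
    Set.mem_ofPred_eq,
    SeparatingDual.eq_zero_iff_forall_dual_eq_zero (R := 𝕜) (ι₀ v)]
  simp only [annihilator_eq_ker, Set.forall_mem_range, hι₀']

/-- If `0 → U → V → W → 0` is an exact sequence of dual Banach spaces
(`U = (U₀)*`, `V = (V₀)*`, `W = (W₀)*`) whose dual maps preserve the preduals
(`π*(W₀) ⊆ V₀`, `ι*(V₀) ⊆ U₀`, where the preduals are regarded as subspaces of the duals
via the canonical embeddings into the double duals), then the norm closure of the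
range of the restriction `π₀ : W₀ → V₀` of `π*` equals the kernel of the restriction
`ι₀ : V₀ → U₀` of `ι*`. -/
theorem predual_sequence_closure_range {U₀ V₀ W₀ : Type*}
    [NormedAddCommGroup U₀] [NormedSpace 𝕜 U₀] [CompleteSpace U₀]
    [NormedAddCommGroup V₀] [NormedSpace 𝕜 V₀] [CompleteSpace V₀]
    [NormedAddCommGroup W₀] [NormedSpace 𝕜 W₀] [CompleteSpace W₀]
    (ι : StrongDual 𝕜 U₀ →L[𝕜] StrongDual 𝕜 V₀) (π : StrongDual 𝕜 V₀ →L[𝕜] StrongDual 𝕜 W₀)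
    (hι : Function.Injective ι)
    (hexact : Set.range ι = {v : StrongDual 𝕜 V₀ | π v = 0})
    (hπ : Function.Surjective π)
    -- `π₀ : W₀ → V₀` is the restriction of `π*` to the preduals:
    (π₀ : W₀ →L[𝕜] V₀)
    (hπ₀ : ∀ w : W₀,
      inclusionInDoubleDual 𝕜 V₀ (π₀ w) = dualMap π (inclusionInDoubleDual 𝕜 W₀ w))
    -- `ι₀ : V₀ → U₀` is the restriction of `ι*` to the preduals:
    (ι₀ : V₀ →L[𝕜] U₀)
    (hι₀ : ∀ v : V₀,
      inclusionInDoubleDual 𝕜 U₀ (ι₀ v) = dualMap ι (inclusionInDoubleDual 𝕜 V₀ v)) :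
    closure (Set.range π₀) = {v : V₀ | ι₀ v = 0} :=
  predual_sequence_closure_range_general ι π hexact π₀ hπ₀ ι₀ hι₀
end

section
/- Let 𝔞 and 𝔠 be Banach spaces over 𝕜 = ℝ or ℂ whose duals 𝔥 := 𝔞* and 𝔫 := 𝔠* are Banach Lie algebras satisfying ad*_η(𝔞) ⊆ 𝔞 for all η ∈ 𝔥 and ad*_ζ(𝔠) ⊆ 𝔠 for all ζ ∈ 𝔫 (where 𝔞 and 𝔠 are regarded as subspaces of 𝔥* and 𝔫* via the canonical embeddings into the double duals). Let ω : 𝔥 × 𝔥 → 𝔫 be a continuous bilinear skew-symmetric map and φ : 𝔥 → aut(𝔫) a continuous linear map into the continuous derivations of 𝔫 satisfying the two conditions: ω([η, η'], η'') + ω([η', η''], η) + ω([η'', η], η') − φ(η)(ω(η', η'')) − φ(η')(ω(η'', η)) − φ(η'')(ω(η, η')) = 0 and ad_{ω(η,η')} + φ([η, η']) − (φ(η)∘φ(η') − φ(η')∘φ(η)) = 0 for all η, η', η'' ∈ 𝔥, so that 𝔤 := 𝔫 ⊕ 𝔥 is a Banach Lie algebra with bracket [(ζ, η), (ζ', η')]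 = ([ζ, ζ'] + φ(η)(ζ') − φ(η')(ζ) + ω(η, η'), [η, η']). Then the coadjoint maps ad*_{(ζ,η)} of 𝔤 map the subspace 𝔠 ⊕ 𝔞 of 𝔤* = 𝔫* ⊕ 𝔥* into itself for all ζ ∈ 𝔫 and η ∈ 𝔥 if and only if the following three conditions hold for all η ∈ 𝔥 and ζ ∈ 𝔫: (1) φ(η)*(𝔠) ⊆ 𝔠, (2) (φ(·)ζ)*(𝔠) ⊆ 𝔞, and (3) (ω(η, ·))*(𝔠) ⊆ 𝔞. -/
open NormedSpace

variable {𝕜 : Type*} [RCLike 𝕜]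

/-!
The coadjoint action of `𝔤 = 𝔫 ⊕ 𝔥` splits as
`ad*_{(ζ,η)} (c, a) = (ad*_ζ c + φ(η)* c, ad*_η a + ω(η, ·)* c - (φ(·)ζ)* c)`.
The terms `ad*_ζ c` and `ad*_η a` always lie in `𝔠` and `𝔞`, so invariance of `𝔠 ⊕ 𝔞` amounts
to `φ(η)* c ∈ 𝔠` and `ω(η, ·)* c - (φ(·)ζ)* c ∈ 𝔞`; the two terms of the latter are linear in
`η` and in `ζ` respectively, so each is isolated by setting the other variable to zero.
-/

section Predual

variable {E F : Type*} [NormedAddCommGroup E] [NormedSpace 𝕜 E]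
  [NormedAddCommGroup F] [NormedSpace 𝕜 F]

variable (𝕜 E) in
/-- `E` inside `E**`, seen as a space of functions on `E*`. -/
def predual : Submodule 𝕜 (StrongDual 𝕜 E → 𝕜) where
  carrier := {g | ∃ e : E, ∀ x, g x = inclusionInDoubleDual 𝕜 E e x}
  add_mem' := by
    rintro g h ⟨e, he⟩ ⟨f, hf⟩
    exact ⟨e + f, fun x => by simp [he, hf]⟩
  zero_mem' := ⟨0, by simp⟩
  smul_mem' := by
    rintro r g ⟨e, he⟩
    exact ⟨r • e, fun x => by simp [he]⟩

theorem exists_inclusionInDoubleDual_add_iff {g : StrongDual 𝕜 E → 𝕜} {h : StrongDual 𝕜 F → 𝕜}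
    (hg : g 0 = 0) (hh : h 0 = 0) :
    (∃ (e : E) (f : F), ∀ x y,
        g x + h y = inclusionInDoubleDual 𝕜 E e x + inclusionInDoubleDual 𝕜 F f y) ↔
      g ∈ predual 𝕜 E ∧ h ∈ predual 𝕜 F := by
  constructor
  · rintro ⟨e, f, hef⟩
    exact ⟨⟨e, fun x => by simpa [hh] using hef x 0⟩, ⟨f, fun y => by simpa [hg] using hef 0 y⟩⟩
  · rintro ⟨⟨e, he⟩, ⟨f, hf⟩⟩
    exact ⟨e, f, fun x y => by rw [he, hf]⟩

end Predual

theorem exists_predual_coadjoint_iff {𝔞 𝔠 : Type*}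
    [NormedAddCommGroup 𝔞] [NormedSpace 𝕜 𝔞] [NormedAddCommGroup 𝔠] [NormedSpace 𝕜 𝔠]
    (bh : StrongDual 𝕜 𝔞 →L[𝕜] StrongDual 𝕜 𝔞 →L[𝕜] StrongDual 𝕜 𝔞)
    (bn : StrongDual 𝕜 𝔠 →L[𝕜] StrongDual 𝕜 𝔠 →L[𝕜] StrongDual 𝕜 𝔠)
    (ω : StrongDual 𝕜 𝔞 →L[𝕜] StrongDual 𝕜 𝔞 →L[𝕜] StrongDual 𝕜 𝔠)
    (φ : StrongDual 𝕜 𝔞 →L[𝕜] StrongDual 𝕜 𝔠 →L[𝕜] StrongDual 𝕜 𝔠)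
    (ζ : StrongDual 𝕜 𝔠) (η : StrongDual 𝕜 𝔞) (c : 𝔠) (a : 𝔞) :
    (∃ (c' : 𝔠) (a' : 𝔞), ∀ ζ' η',
      inclusionInDoubleDual 𝕜 𝔠 c (bn ζ ζ' + φ η ζ' - φ η' ζ + ω η η') +
          inclusionInDoubleDual 𝕜 𝔞 a (bh η η') =
        inclusionInDoubleDual 𝕜 𝔠 c' ζ' + inclusionInDoubleDual 𝕜 𝔞 a' η') ↔
      ((fun ζ' => inclusionInDoubleDual 𝕜 𝔠 c (bn ζ ζ')) +
          fun ζ' => inclusionInDoubleDual 𝕜 𝔠 c (φ η ζ')) ∈ predual 𝕜 𝔠 ∧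
        ((fun η' => inclusionInDoubleDual 𝕜 𝔞 a (bh η η')) +
          ((fun η' => inclusionInDoubleDual 𝕜 𝔠 c (ω η η')) -
            fun η' => inclusionInDoubleDual 𝕜 𝔠 c (φ η' ζ))) ∈ predual 𝕜 𝔞 := by
  rw [← exists_inclusionInDoubleDual_add_iff (by simp) (by simp)]
  refine exists₂_congr fun c' a' => forall₂_congr fun ζ' η' => Eq.congr_left ?_
  simp only [map_add, map_sub, Pi.add_apply, Pi.sub_apply]
  ring

theorem coadjoint_invariance_iff_general {𝔞 𝔠 : Type*}
    [NormedAddCommGroup 𝔞] [NormedSpace 𝕜 𝔞]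
    [NormedAddCommGroup 𝔠] [NormedSpace 𝕜 𝔠]
    -- the Banach Lie algebra bracket on `𝔥 := 𝔞*`:
    (bh : StrongDual 𝕜 𝔞 →L[𝕜] StrongDual 𝕜 𝔞 →L[𝕜] StrongDual 𝕜 𝔞)
    -- the Banach Lie algebra bracket on `𝔫 := 𝔠*`:
    (bn : StrongDual 𝕜 𝔠 →L[𝕜] StrongDual 𝕜 𝔠 →L[𝕜] StrongDual 𝕜 𝔠)
    -- `ad*_η(𝔞) ⊆ 𝔞` for all `η ∈ 𝔥`:
    (ha : ∀ (η : StrongDual 𝕜 𝔞) (a : 𝔞), ∃ a' : 𝔞, ∀ x : StrongDual 𝕜 𝔞,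
      inclusionInDoubleDual 𝕜 𝔞 a (bh η x) = inclusionInDoubleDual 𝕜 𝔞 a' x)
    -- `ad*_ζ(𝔠) ⊆ 𝔠` for all `ζ ∈ 𝔫`:
    (hc : ∀ (ζ : StrongDual 𝕜 𝔠) (c : 𝔠), ∃ c' : 𝔠, ∀ x : StrongDual 𝕜 𝔠,
      inclusionInDoubleDual 𝕜 𝔠 c (bn ζ x) = inclusionInDoubleDual 𝕜 𝔠 c' x)
    (ω : StrongDual 𝕜 𝔞 →L[𝕜] StrongDual 𝕜 𝔞 →L[𝕜] StrongDual 𝕜 𝔠)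
    (φ : StrongDual 𝕜 𝔞 →L[𝕜] StrongDual 𝕜 𝔠 →L[𝕜] StrongDual 𝕜 𝔠) :
    -- the coadjoint maps of `𝔤 = 𝔫 ⊕ 𝔥` preserve `𝔠 ⊕ 𝔞 ⊆ 𝔫* ⊕ 𝔥* = 𝔤*` ...
    (∀ (ζ : StrongDual 𝕜 𝔠) (η : StrongDual 𝕜 𝔞) (c : 𝔠) (a : 𝔞), ∃ (c' : 𝔠) (a' : 𝔞),
        ∀ (ζ' : StrongDual 𝕜 𝔠) (η' : StrongDual 𝕜 𝔞),
          inclusionInDoubleDual 𝕜 𝔠 c (bn ζ ζ' + φ η ζ' - φ η' ζ + ω η η') +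
              inclusionInDoubleDual 𝕜 𝔞 a (bh η η') =
            inclusionInDoubleDual 𝕜 𝔠 c' ζ' + inclusionInDoubleDual 𝕜 𝔞 a' η') ↔
      -- ... if and only if (1) `φ(η)*(𝔠) ⊆ 𝔠`:
      ((∀ (η : StrongDual 𝕜 𝔞) (c : 𝔠), ∃ c' : 𝔠, ∀ ζ' : StrongDual 𝕜 𝔠,
          inclusionInDoubleDual 𝕜 𝔠 c (φ η ζ') = inclusionInDoubleDual 𝕜 𝔠 c' ζ') ∧
        -- (2) `(φ(·)ζ)*(𝔠) ⊆ 𝔞`: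
        (∀ (ζ : StrongDual 𝕜 𝔠) (c : 𝔠), ∃ a' : 𝔞, ∀ η' : StrongDual 𝕜 𝔞,
          inclusionInDoubleDual 𝕜 𝔠 c (φ η' ζ) = inclusionInDoubleDual 𝕜 𝔞 a' η') ∧
        -- (3) `(ω(η, ·))*(𝔠) ⊆ 𝔞`:
        (∀ (η : StrongDual 𝕜 𝔞) (c : 𝔠), ∃ a' : 𝔞, ∀ η' : StrongDual 𝕜 𝔞,
          inclusionInDoubleDual 𝕜 𝔠 c (ω η η') = inclusionInDoubleDual 𝕜 𝔞 a' η')) := by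
  have hadh : ∀ η a, (fun η' => inclusionInDoubleDual 𝕜 𝔞 a (bh η η')) ∈ predual 𝕜 𝔞 := ha
  have hadn : ∀ ζ c, (fun ζ' => inclusionInDoubleDual 𝕜 𝔠 c (bn ζ ζ')) ∈ predual 𝕜 𝔠 := hc
  simp only [exists_predual_coadjoint_iff, (predual 𝕜 𝔞).add_mem_iff_right (hadh _ _),
    (predual 𝕜 𝔠).add_mem_iff_right (hadn _ _), forall_const]
  constructor
  · intro H
    refine ⟨fun η c => (H 0 η c).1, fun ζ c => ?_, fun η c => ?_⟩
    · have h2 := (H ζ 0 c).2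
      simp only [map_zero, zero_apply, ← Pi.zero_def, zero_sub, neg_mem_iff] at h2
      exact h2
    · have h3 := (H 0 η c).2
      simp only [map_zero, ← Pi.zero_def, sub_zero] at h3
      exact h3
  · rintro ⟨h1, h2, h3⟩ ζ η c
    exact ⟨h1 η c, sub_mem (h3 η c) (h2 ζ c)⟩

/-- Let `𝔞`, `𝔠` be Banach spaces whose duals `𝔥 := 𝔞*`, `𝔫 := 𝔠*` are Banach Lie algebras
(with continuous bilinear Lie brackets `bh`, `bn`) satisfying `ad*_η(𝔞) ⊆ 𝔞` and
`ad*_ζ(𝔠) ⊆ 𝔠` (where `𝔞 ⊆ 𝔥*`, `𝔠 ⊆ 𝔫*` via the canonical embeddings into the double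
duals).  Let `ω : 𝔥 × 𝔥 → 𝔫` be a continuous bilinear skew-symmetric map and
`φ : 𝔥 → aut(𝔫)` a continuous linear map into the derivations of `𝔫` satisfying the
cocycle and representation conditions, so that `𝔤 := 𝔫 ⊕ 𝔥` is a Banach Lie algebra with
bracket `[(ζ, η), (ζ', η')] = ([ζ, ζ'] + φ(η)(ζ') − φ(η')(ζ) + ω(η, η'), [η, η'])`.
Then the coadjoint maps `ad*_{(ζ,η)}` of `𝔤` map the subspace `𝔠 ⊕ 𝔞` of
`𝔤* = 𝔫* ⊕ 𝔥*` into itself for all `ζ`, `η` if and only if for all `η ∈ 𝔥`, `ζ ∈ 𝔫`: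
(1) `φ(η)*(𝔠) ⊆ 𝔠`, (2) `(φ(·)ζ)*(𝔠) ⊆ 𝔞`, (3) `(ω(η, ·))*(𝔠) ⊆ 𝔞`. -/
theorem coadjoint_invariance_iff {𝔞 𝔠 : Type*}
    [NormedAddCommGroup 𝔞] [NormedSpace 𝕜 𝔞] [CompleteSpace 𝔞]
    [NormedAddCommGroup 𝔠] [NormedSpace 𝕜 𝔠] [CompleteSpace 𝔠]
    -- the Banach Lie algebra bracket on `𝔥 := 𝔞*`:
    (bh : StrongDual 𝕜 𝔞 →L[𝕜] StrongDual 𝕜 𝔞 →L[𝕜] StrongDual 𝕜 𝔞)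
    (bh_alt : ∀ η, bh η η = 0)
    (bh_jacobi : ∀ η η' η'', bh (bh η η') η'' + bh (bh η' η'') η + bh (bh η'' η) η' = 0)
    -- the Banach Lie algebra bracket on `𝔫 := 𝔠*`:
    (bn : StrongDual 𝕜 𝔠 →L[𝕜] StrongDual 𝕜 𝔠 →L[𝕜] StrongDual 𝕜 𝔠)
    (bn_alt : ∀ ζ, bn ζ ζ = 0)
    (bn_jacobi : ∀ ζ ζ' ζ'', bn (bn ζ ζ') ζ'' + bn (bn ζ' ζ'') ζ + bn (bn ζ'' ζ) ζ' = 0)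
    -- `ad*_η(𝔞) ⊆ 𝔞` for all `η ∈ 𝔥`:
    (ha : ∀ (η : StrongDual 𝕜 𝔞) (a : 𝔞), ∃ a' : 𝔞, ∀ x : StrongDual 𝕜 𝔞,
      inclusionInDoubleDual 𝕜 𝔞 a (bh η x) = inclusionInDoubleDual 𝕜 𝔞 a' x)
    -- `ad*_ζ(𝔠) ⊆ 𝔠` for all `ζ ∈ 𝔫`:
    (hc : ∀ (ζ : StrongDual 𝕜 𝔠) (c : 𝔠), ∃ c' : 𝔠, ∀ x : StrongDual 𝕜 𝔠,
      inclusionInDoubleDual 𝕜 𝔠 c (bn ζ x) = inclusionInDoubleDual 𝕜 𝔠 c' x)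
    (ω : StrongDual 𝕜 𝔞 →L[𝕜] StrongDual 𝕜 𝔞 →L[𝕜] StrongDual 𝕜 𝔠)
    (ω_skew : ∀ η η', ω η η' = -ω η' η)
    (φ : StrongDual 𝕜 𝔞 →L[𝕜] StrongDual 𝕜 𝔠 →L[𝕜] StrongDual 𝕜 𝔠)
    (φ_der : ∀ η ζ ζ', φ η (bn ζ ζ') = bn (φ η ζ) ζ' + bn ζ (φ η ζ'))
    -- the cocycle condition on `ω`:
    (hcocycle : ∀ η η' η'',
      ω (bh η η') η'' + ω (bh η' η'') η + ω (bh η'' η) η'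
        - φ η (ω η' η'') - φ η' (ω η'' η) - φ η'' (ω η η') = 0)
    -- the representation-type condition:
    (hrep : ∀ η η' ζ, bn (ω η η') ζ + φ (bh η η') ζ - (φ η (φ η' ζ) - φ η' (φ η ζ)) = 0) :
    -- the coadjoint maps of `𝔤 = 𝔫 ⊕ 𝔥` preserve `𝔠 ⊕ 𝔞 ⊆ 𝔫* ⊕ 𝔥* = 𝔤*` ...
    (∀ (ζ : StrongDual 𝕜 𝔠) (η : StrongDual 𝕜 𝔞) (c : 𝔠) (a : 𝔞), ∃ (c' : 𝔠) (a' : 𝔞),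
        ∀ (ζ' : StrongDual 𝕜 𝔠) (η' : StrongDual 𝕜 𝔞),
          inclusionInDoubleDual 𝕜 𝔠 c (bn ζ ζ' + φ η ζ' - φ η' ζ + ω η η') +
              inclusionInDoubleDual 𝕜 𝔞 a (bh η η') =
            inclusionInDoubleDual 𝕜 𝔠 c' ζ' + inclusionInDoubleDual 𝕜 𝔞 a' η') ↔
      -- ... if and only if (1) `φ(η)*(𝔠) ⊆ 𝔠`:
      ((∀ (η : StrongDual 𝕜 𝔞) (c : 𝔠), ∃ c' : 𝔠, ∀ ζ' : StrongDual 𝕜 𝔠,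
          inclusionInDoubleDual 𝕜 𝔠 c (φ η ζ') = inclusionInDoubleDual 𝕜 𝔠 c' ζ') ∧
        -- (2) `(φ(·)ζ)*(𝔠) ⊆ 𝔞`:
        (∀ (ζ : StrongDual 𝕜 𝔠) (c : 𝔠), ∃ a' : 𝔞, ∀ η' : StrongDual 𝕜 𝔞,
          inclusionInDoubleDual 𝕜 𝔠 c (φ η' ζ) = inclusionInDoubleDual 𝕜 𝔞 a' η') ∧
        -- (3) `(ω(η, ·))*(𝔠) ⊆ 𝔞`:
        (∀ (η : StrongDual 𝕜 𝔞) (c : 𝔠), ∃ a' : 𝔞, ∀ η' : StrongDual 𝕜 𝔞,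
          inclusionInDoubleDual 𝕜 𝔠 c (ω η η') = inclusionInDoubleDual 𝕜 𝔞 a' η')) :=
  coadjoint_invariance_iff_general bh bn ha hc ω φ
end

section
/- Let A be an associative (not necessarily commutative) ring, let p ∈ A be an idempotent (p² = p), and set q := 1 − p. For X, X' ∈ A define ω(X, X') := pXqX'p − pX'qXp. Then for all X, X' ∈ A and all σ ∈ A with pσp = σ, the identity −[ω(X, X'), σ] + [p[X, X']p, σ] − [pXp, [pX'p, σ]] + [pX'p, [pXp, σ]] = 0 holds, where [a, b] := ab − ba denotes the ring commutator. -/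
/-!
Inserting `1 = p + (1 - p)` between `X` and `X'` splits the compression `p⁅X, X'⁆p` into the
commutator of the compressions and the cocycle `ω(X, X')`. The `ω`-terms then cancel, and what is
left is the Jacobi identity for `pXp`, `pX'p` and `σ`.
-/

theorem IsIdempotentElem.mul_lie_mul_eq_lie_add {A : Type*} [Ring A] {p : A}
    (hp : IsIdempotentElem p) (X Y : A) :
    p * ⁅X, Y⁆ * p =
      ⁅p * X * p, p * Y * p⁆ + (p * X * (1 - p) * Y * p - p * Y * (1 - p) * X * p) := by
  have hpp : ∀ x : A, p * (p * x) = p * x := fun x => by rw [← mul_assoc, hp.eq]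
  simp only [Ring.lie_def, mul_sub, sub_mul, mul_one, mul_assoc, hpp]
  abel

theorem restricted_representation_condition_general {A : Type*} [Ring A]
    (p : A) (hp : p * p = p) (X X' σ : A) :
    -⁅p * X * (1 - p) * X' * p - p * X' * (1 - p) * X * p, σ⁆
        + ⁅p * ⁅X, X'⁆ * p, σ⁆
        - ⁅p * X * p, ⁅p * X' * p, σ⁆⁆
        + ⁅p * X' * p, ⁅p * X * p, σ⁆⁆ = 0 := by
  let _ : LieRing A := LieRing.ofAssociativeRing -- not a global instance in Mathlib
  rw [IsIdempotentElem.mul_lie_mul_eq_lie_add hp, add_lie, lie_lie]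
  abel

/-- Let `A` be an associative unital ring, `p` an idempotent, `q := 1 - p`, and
`ω(X, X') := pXqX'p − pX'qXp`.  Then for all `X, X' ∈ A` and all `σ ∈ A` with `pσp = σ`,
`−[ω(X, X'), σ] + [p[X, X']p, σ] − [pXp, [pX'p, σ]] + [pX'p, [pXp, σ]] = 0`,
where `[a, b] = ab − ba`. -/
theorem restricted_representation_condition {A : Type*} [Ring A]
    (p : A) (hp : p * p = p) (X X' σ : A) (hσ : p * σ * p = σ) :
    -⁅p * X * (1 - p) * X' * p - p * X' * (1 - p) * X * p, σ⁆
        + ⁅p * ⁅X, X'⁆ * p, σ⁆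
        - ⁅p * X * p, ⁅p * X' * p, σ⁆⁆
        + ⁅p * X' * p, ⁅p * X * p, σ⁆⁆ = 0 :=
  restricted_representation_condition_general p hp X X' σ
end

section
/- Let A be an associative (not necessarily commutative) ring, let p ∈ A be an idempotent (p² = p), and set q := 1 − p. For X, X' ∈ A define ω(X, X') := pXqX'p − pX'qXp. Then for all X, X', X'' ∈ A the identity ω([X, X'], X'') + ω([X', X''], X) + ω([X'', X], X') − [pXp, ω(X', X'')] − [pX'p, ω(X'', X)] − [pX''p, ω(X, X')] = 0 holds, where [a, b] := ab − ba denotes the ring commutator. -/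
/-!
Write `φ X = pXp` for the corner map. For an idempotent `p` one has
`p[X, X']p − [pXp, pX'p] = pXqX'p − pX'qXp`, so `ω` is the curvature
`ω(X, X') = φ[X, X'] − [φX, φX']`, measuring how far the additive map `φ` is from a Lie
homomorphism. The cocycle condition then holds for the curvature of any additive map between Lie
rings: expanding it, the terms with two brackets cancel by the Jacobi identity (in the source and
in the target), and the remaining mixed terms cancel in pairs by antisymmetry.
-/

section LieCurvature

variable {L M : Type*} [LieRing L] [LieRing M]

def lieCurvature (φ : L →+ M) (x y : L) : M := φ ⁅x, y⁆ - ⁅φ x, φ y⁆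

theorem lieCurvature_cocycle (φ : L →+ M) (x y z : L) :
    lieCurvature φ ⁅x, y⁆ z + lieCurvature φ ⁅y, z⁆ x + lieCurvature φ ⁅z, x⁆ y
      - ⁅φ x, lieCurvature φ y z⁆ - ⁅φ y, lieCurvature φ z x⁆ - ⁅φ z, lieCurvature φ x y⁆ = 0 := by
  have jacobi_source : φ ⁅⁅x, y⁆, z⁆ + φ ⁅⁅y, z⁆, x⁆ + φ ⁅⁅z, x⁆, y⁆ = 0 := by
    rw [← map_add, ← map_add, ← lie_skew ⁅x, y⁆ z, ← lie_skew ⁅y, z⁆ x, ← lie_skew ⁅z, x⁆ y,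
      ← neg_add, ← neg_add, add_rotate, lie_jacobi, neg_zero, map_zero]
  have jacobi_target : ⁅φ x, ⁅φ y, φ z⁆⁆ + ⁅φ y, ⁅φ z, φ x⁆⁆ + ⁅φ z, ⁅φ x, φ y⁆⁆ = 0 :=
    lie_jacobi _ _ _
  calc
    _ = (φ ⁅⁅x, y⁆, z⁆ + φ ⁅⁅y, z⁆, x⁆ + φ ⁅⁅z, x⁆, y⁆)
        + (⁅φ x, ⁅φ y, φ z⁆⁆ + ⁅φ y, ⁅φ z, φ x⁆⁆ + ⁅φ z, ⁅φ x, φ y⁆⁆) := by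
      simp only [lieCurvature, lie_sub, ← lie_skew (φ ⁅y, z⁆) (φ x), ← lie_skew (φ ⁅z, x⁆) (φ y),
        ← lie_skew (φ ⁅x, y⁆) (φ z)]
      abel
    _ = 0 := by rw [jacobi_source, jacobi_target, add_zero]

end LieCurvature

section Corner

variable {A : Type*} [Ring A]

attribute [local instance] LieRing.ofAssociativeRing

def corner (p : A) : A →+ A where
  toFun X := p * X * p
  map_zero' := by simp
  map_add' X Y := by simp [mul_add, add_mul]

@[simp]
theorem corner_apply (p X : A) : corner p X = p * X * p := rfl

theorem lieCurvature_corner {p : A} (hp : p * p = p) (X Y : A) :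
    lieCurvature (corner p) X Y = p * X * (1 - p) * Y * p - p * Y * (1 - p) * X * p := by
  have hp' : ∀ Z : A, p * (p * Z) = p * Z := fun Z => by rw [← mul_assoc, hp]
  simp only [lieCurvature, corner_apply, Ring.lie_def, mul_sub, sub_mul, mul_one, mul_assoc, hp']
  abel

end Corner

/-- Let `A` be an associative unital ring, `p` an idempotent, `q := 1 - p`, and
`ω(X, X') := pXqX'p − pX'qXp`.  Then for all `X, X', X'' ∈ A`,
`ω([X, X'], X'') + ω([X', X''], X) + ω([X'', X], X')
  − [pXp, ω(X', X'')] − [pX'p, ω(X'', X)] − [pX''p, ω(X, X')] = 0`,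
where `[a, b] = ab − ba`. -/
theorem restricted_cocycle_condition {A : Type*} [Ring A]
    (p : A) (hp : p * p = p) (X X' X'' : A) :
    (p * ⁅X, X'⁆ * (1 - p) * X'' * p - p * X'' * (1 - p) * ⁅X, X'⁆ * p)
        + (p * ⁅X', X''⁆ * (1 - p) * X * p - p * X * (1 - p) * ⁅X', X''⁆ * p)
        + (p * ⁅X'', X⁆ * (1 - p) * X' * p - p * X' * (1 - p) * ⁅X'', X⁆ * p)
        - ⁅p * X * p, p * X' * (1 - p) * X'' * p - p * X'' * (1 - p) * X' * p⁆
        - ⁅p * X' * p, p * X'' * (1 - p) * X * p - p * X * (1 - p) * X'' * p⁆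
        - ⁅p * X'' * p, p * X * (1 - p) * X' * p - p * X' * (1 - p) * X * p⁆ = 0 := by
  let _ := LieRing.ofAssociativeRing (A := A)
  simpa only [lieCurvature_corner hp, corner_apply] using lieCurvature_cocycle (corner p) X X' X''
end
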